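/- arXiv:2005.04925 — 5 statements merged into one kernel-verified Lean document; each statement's English description precedes it below -/
import Mathlib

section
/- Let n, d ≥ 1 and let A₁, …, Aₙ be skew-Hermitian d×d complex matrices. Suppose κ ≥ 0 is a real number with Σ_{k=1}^n Aₖᴴ Aₖ = κ·I, and L ≥ 0 satisfies ‖Aₖ‖ ≤ L for every k. Then for every real number u, ‖ Σ_{k=1}^n (exp(uAₖ) − I)ᴴ (exp(uAₖ) − I) − u²κ·I ‖ ≤ n|u|³L³ + n(u⁴/4)L⁴, where exp denotes the matrix exponential, I the d×d identity matrix, and ‖·‖ the ℓ²→ℓ² operator norm. -/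
open Matrix

/-- The ℓ²→ℓ² operator norm of a square complex matrix. -/
noncomputable def matOpNorm {d : ℕ} (A : Matrix (Fin d) (Fin d) ℂ) : ℝ :=
  ‖Matrix.toEuclideanCLM (𝕜 := ℂ) A‖

/-!
Write `exp(ta) - 1 = ta + e`. Since `exp(ta)` is unitary for skew-adjoint `a`, the derivative
`a exp(ta)` has norm `‖a‖`, and the mean value inequality gives `‖exp(ta) - 1‖ ≤ |t|‖a‖` and then
`‖e‖ ≤ t²‖a‖²/2`. Expanding `star (ta + e) (ta + e)`, the leading terms sum to
`t² Σ star aₖ aₖ = t²κ`, and the cross and quadratic terms in `e` are bounded by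
`2|t|‖a‖‖e‖ + ‖e‖² ≤ |t|³‖a‖³ + t⁴‖a‖⁴/4`.
-/

open NormedSpace

theorem norm_star_add_mul_add_sub_le {R : Type*} [NonUnitalNormedRing R] [StarRing R]
    [NormedStarGroup R] (x e : R) :
    ‖star (x + e) * (x + e) - star x * x‖ ≤ 2 * ‖x‖ * ‖e‖ + ‖e‖ ^ 2 := by
  have h : star (x + e) * (x + e) - star x * x = star x * e + star e * x + star e * e := by
    simp only [star_add, add_mul, mul_add]; abel
  rw [h]
  calc _ ≤ ‖star x * e‖ + ‖star e * x‖ + ‖star e * e‖ := norm_add₃_le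
    _ ≤ ‖x‖ * ‖e‖ + ‖e‖ * ‖x‖ + ‖e‖ * ‖e‖ := by
        gcongr <;> exact (norm_mul_le _ _).trans_eq (by rw [norm_star])
    _ = 2 * ‖x‖ * ‖e‖ + ‖e‖ ^ 2 := by ring

theorem hasDerivAt_exp_ofReal_smul {𝔸 : Type*} [NormedRing 𝔸] [NormedAlgebra ℂ 𝔸]
    [CompleteSpace 𝔸] (a : 𝔸) (t : ℝ) :
    HasDerivAt (fun s : ℝ => exp ((s : ℂ) • a)) (a * exp ((t : ℂ) • a)) t := by
  simpa [Function.comp_def] using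
    (hasDerivAt_exp_smul_const' (𝕂 := ℂ) a (t : ℂ)).scomp t (hasDerivAt_id t).ofReal_comp

section SkewAdjoint

variable {𝔸 : Type*} [CStarAlgebra 𝔸] {a : 𝔸}

theorem exp_ofReal_smul_mem_unitary (ha : a ∈ skewAdjoint 𝔸) (t : ℝ) :
    exp ((t : ℂ) • a) ∈ unitary 𝔸 :=
  let +nondep : NormedAlgebra ℚ 𝔸 := .restrictScalars ℚ ℂ 𝔸
  exp_mem_unitary_of_mem_skewAdjoint (Complex.coe_smul t a ▸ skewAdjoint.smul_mem t ha)

theorem norm_exp_ofReal_smul_sub_one_le (ha : a ∈ skewAdjoint 𝔸) (t : ℝ) :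
    ‖exp ((t : ℂ) • a) - 1‖ ≤ |t| * ‖a‖ := by
  have h := convex_univ.norm_image_sub_le_of_norm_hasDerivWithin_le
    (fun s _ => (hasDerivAt_exp_ofReal_smul a s).hasDerivWithinAt)
    (fun s _ => (CStarRing.norm_mul_mem_unitary a (exp_ofReal_smul_mem_unitary ha s)).le)
    (Set.mem_univ 0) (Set.mem_univ t)
  simpa [mul_comm] using h

theorem norm_exp_ofReal_smul_sub_one_sub_le (ha : a ∈ skewAdjoint 𝔸) (t : ℝ) :
    ‖exp ((t : ℂ) • a) - 1 - (t : ℂ) • a‖ ≤ t ^ 2 * ‖a‖ ^ 2 / 2 := by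
  wlog ht : 0 ≤ t generalizing a t
  · simpa [neg_smul, smul_neg] using this (neg_mem ha) (-t) (by linarith)
  have hderiv (s : ℝ) : HasDerivAt (fun s : ℝ => exp ((s : ℂ) • a) - 1 - (s : ℂ) • a)
      (a * (exp ((s : ℂ) • a) - 1)) s := by
    rw [mul_sub, mul_one]
    exact ((hasDerivAt_exp_ofReal_smul a s).sub_const 1).sub
      (by simpa using ((hasDerivAt_id s).ofReal_comp).smul_const a)
  have hbound (s : ℝ) : HasDerivAt (fun s : ℝ => s ^ 2 * ‖a‖ ^ 2 / 2) (s * ‖a‖ ^ 2) s :=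
    (((hasDerivAt_pow 2 s).mul_const (‖a‖ ^ 2)).div_const 2).congr_deriv (by ring)
  refine image_norm_le_of_norm_deriv_right_le_deriv_boundary
    (fun s _ => (hderiv s).continuousAt.continuousWithinAt)
    (fun s _ => (hderiv s).hasDerivWithinAt) (by simp) hbound
    (fun s hs => ?_) ⟨ht, le_rfl⟩
  calc ‖a * (exp ((s : ℂ) • a) - 1)‖ ≤ ‖a‖ * (|s| * ‖a‖) :=
        (norm_mul_le _ _).trans (by gcongr; exact norm_exp_ofReal_smul_sub_one_le ha s)
    _ = s * ‖a‖ ^ 2 := by rw [abs_of_nonneg hs.1]; ring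

theorem norm_star_exp_ofReal_smul_sub_one_mul_sub_le (ha : a ∈ skewAdjoint 𝔸) (t : ℝ) :
    ‖star (exp ((t : ℂ) • a) - 1) * (exp ((t : ℂ) • a) - 1) -
        star ((t : ℂ) • a) * ((t : ℂ) • a)‖ ≤ |t| ^ 3 * ‖a‖ ^ 3 + t ^ 4 / 4 * ‖a‖ ^ 4 := by
  set e := exp ((t : ℂ) • a) - 1 - (t : ℂ) • a
  have he : ‖e‖ ≤ t ^ 2 * ‖a‖ ^ 2 / 2 := norm_exp_ofReal_smul_sub_one_sub_le ha t
  have hx : ‖(t : ℂ) • a‖ = |t| * ‖a‖ := by rw [norm_smul, Complex.norm_real, Real.norm_eq_abs]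
  calc _ = ‖star ((t : ℂ) • a + e) * ((t : ℂ) • a + e) - star ((t : ℂ) • a) * ((t : ℂ) • a)‖ := by
        rw [add_sub_cancel]
    _ ≤ 2 * ‖(t : ℂ) • a‖ * ‖e‖ + ‖e‖ ^ 2 := norm_star_add_mul_add_sub_le _ _
    _ ≤ 2 * (|t| * ‖a‖) * (t ^ 2 * ‖a‖ ^ 2 / 2) + (t ^ 2 * ‖a‖ ^ 2 / 2) ^ 2 := by
        rw [hx]; gcongr
    _ = |t| ^ 3 * ‖a‖ ^ 3 + t ^ 4 / 4 * ‖a‖ ^ 4 := by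
        rw [show t ^ 4 = (t ^ 2) ^ 2 by ring, ← sq_abs t]; ring

theorem norm_sum_star_exp_ofReal_smul_sub_one_mul_sub_le {ι : Type*} [Fintype ι] (a : ι → 𝔸)
    (ha : ∀ k, a k ∈ skewAdjoint 𝔸) {κ L : ℝ} (hsum : ∑ k, star (a k) * a k = (κ : ℂ) • 1)
    (hL : ∀ k, ‖a k‖ ≤ L) (t : ℝ) :
    ‖∑ k, star (exp ((t : ℂ) • a k) - 1) * (exp ((t : ℂ) • a k) - 1) -
        ((t ^ 2 * κ : ℝ) : ℂ) • (1 : 𝔸)‖ ≤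
      Fintype.card ι * (|t| ^ 3 * L ^ 3 + t ^ 4 / 4 * L ^ 4) := by
  have hquad : ∑ k, star ((t : ℂ) • a k) * ((t : ℂ) • a k) = ((t ^ 2 * κ : ℝ) : ℂ) • (1 : 𝔸) := by
    simp only [star_smul, Complex.star_def, Complex.conj_ofReal, smul_mul_smul_comm,
      ← Finset.smul_sum, hsum, smul_smul]
    congr 1
    push_cast
    ring
  have hterm (k : ι) : ‖star (exp ((t : ℂ) • a k) - 1) * (exp ((t : ℂ) • a k) - 1) -
      star ((t : ℂ) • a k) * ((t : ℂ) • a k)‖ ≤ |t| ^ 3 * L ^ 3 + t ^ 4 / 4 * L ^ 4 := by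
    have hk : 0 ≤ ‖a k‖ := norm_nonneg _
    calc _ ≤ |t| ^ 3 * ‖a k‖ ^ 3 + t ^ 4 / 4 * ‖a k‖ ^ 4 :=
          norm_star_exp_ofReal_smul_sub_one_mul_sub_le (ha k) t
      _ ≤ |t| ^ 3 * L ^ 3 + t ^ 4 / 4 * L ^ 4 := by gcongr <;> exact hL k
  rw [← hquad, ← Finset.sum_sub_distrib]
  simpa only [Finset.sum_const, Finset.card_univ, nsmul_eq_mul]
    using norm_sum_le_of_le Finset.univ fun k _ => hterm k

end SkewAdjoint

theorem sum_exp_sub_one_conjTranspose_mul_eq_laplace_general {n d : ℕ}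
    (A : Fin n → Matrix (Fin d) (Fin d) ℂ) (hA : ∀ k, (A k)ᴴ = -(A k))
    (κ L : ℝ)
    (hsum : ∑ k, (A k)ᴴ * A k = (κ : ℂ) • (1 : Matrix (Fin d) (Fin d) ℂ))
    (hAL : ∀ k, matOpNorm (A k) ≤ L) (u : ℝ) :
    matOpNorm (∑ k, (NormedSpace.exp ((u : ℂ) • A k) - 1)ᴴ *
          (NormedSpace.exp ((u : ℂ) • A k) - 1) -
        ((u ^ 2 * κ : ℝ) : ℂ) • (1 : Matrix (Fin d) (Fin d) ℂ)) ≤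
      n * |u| ^ 3 * L ^ 3 + n * (u ^ 4 / 4) * L ^ 4 := by
  -- `matOpNorm` is by definition the norm of the C⋆-algebra of matrices with the operator norm
  open scoped Matrix.Norms.L2Operator in
  have h := norm_sum_star_exp_ofReal_smul_sub_one_mul_sub_le A
    (fun k => skewAdjoint.mem_iff.mpr (hA k)) hsum hAL u
  rw [Fintype.card_fin] at h
  exact h.trans_eq (by ring)

/-- Lemma 3.3 of the paper, matrix form: if `A₁, …, Aₙ` are skew-Hermitian matrices with
`Σ Aₖᴴ Aₖ = κ·I` and `‖Aₖ‖ ≤ L`, then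
`‖Σ (exp(uAₖ) − I)ᴴ(exp(uAₖ) − I) − u²κ·I‖ ≤ n|u|³L³ + n(u⁴/4)L⁴`. -/
theorem sum_exp_sub_one_conjTranspose_mul_eq_laplace {n d : ℕ} (hn : 1 ≤ n) (hd : 1 ≤ d)
    (A : Fin n → Matrix (Fin d) (Fin d) ℂ) (hA : ∀ k, (A k)ᴴ = -(A k))
    (κ L : ℝ) (hκ : 0 ≤ κ) (hL : 0 ≤ L)
    (hsum : ∑ k, (A k)ᴴ * A k = (κ : ℂ) • (1 : Matrix (Fin d) (Fin d) ℂ))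
    (hAL : ∀ k, matOpNorm (A k) ≤ L) (u : ℝ) :
    matOpNorm (∑ k, (NormedSpace.exp ((u : ℂ) • A k) - 1)ᴴ *
          (NormedSpace.exp ((u : ℂ) • A k) - 1) -
        ((u ^ 2 * κ : ℝ) : ℂ) • (1 : Matrix (Fin d) (Fin d) ℂ)) ≤
      n * |u| ^ 3 * L ^ 3 + n * (u ^ 4 / 4) * L ^ 4 :=
  sum_exp_sub_one_conjTranspose_mul_eq_laplace_general A hA κ L hsum hAL u
end

section
/- Let n, d ≥ 1 and let A₁, …, Aₙ be skew-Hermitian d×d complex matrices. Suppose κ ≥ 0 and L ≥ 0 are real numbers with Σ_{k=1}^n Aₖᴴ Aₖ = κ·I, ‖Aₖ‖ ≤ L for every k, and L² ≤ κ. Then for every d×d complex matrix B and every real number u, the real part of tr( Σ_{k=1}^n (exp(uAₖ) − I)ᴴ (exp(uAₖ) − I) · B Bᴴ ) is at least ‖B‖_HS² · u²κ · (1 − n|u|L − n(u²/4)L²), where ‖B‖_HS = √(tr(BᴴB)) is the Hilbert–Schmidt (Frobenius) norm and ‖·‖ the ℓ²→ℓ² operator norm. -/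
/-!
Write `Xₖ = u Aₖ` and `Eₖ = exp Xₖ - 1`. Since `Xₖ` is skew-adjoint, every `exp (t Xₖ)` is
unitary, so two applications of the mean value inequality bound the Taylor remainder
`Rₖ = Eₖ - Xₖ` by `‖Xₖ‖² / 2`. Expanding `(Xₖ + Rₖ)ᴴ (Xₖ + Rₖ)` and bounding the self-adjoint
cross term below by minus its norm gives the Loewner inequality `Eₖᴴ Eₖ ≥ Xₖᴴ Xₖ - ‖Xₖ‖³`; summing,
`∑ Eₖᴴ Eₖ ≥ u²κ - n (|u| L)³`. Pairing with the positive matrix `B Bᴴ` under the trace turns this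
into a lower bound by `‖B‖²_HS`, and `(|u| L)² ≤ u²κ` absorbs the cubic term.
-/

open Matrix

/-- The Hilbert–Schmidt (Frobenius) norm of a square complex matrix. -/
noncomputable def hsNorm {d : ℕ} (A : Matrix (Fin d) (Fin d) ℂ) : ℝ :=
  Real.sqrt (Matrix.trace (Aᴴ * A)).re

open Set NormedSpace

theorem norm_exp_sub_one_sub_le_of_norm_exp_smul_le_one {𝔸 : Type*} [NormedRing 𝔸]
    [NormedAlgebra ℝ 𝔸] [CompleteSpace 𝔸] {a : 𝔸}
    (h : ∀ t ∈ Icc (0 : ℝ) 1, ‖exp (t • a)‖ ≤ 1) :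
    ‖exp a - 1 - a‖ ≤ ‖a‖ ^ 2 / 2 := by
  have hexp (t : ℝ) : HasDerivAt (fun s : ℝ ↦ exp (s • a)) (exp (t • a) * a) t :=
    hasDerivAt_exp_smul_const a t
  have hlin : ∀ t ∈ Icc (0 : ℝ) 1, ‖exp (t • a) - 1‖ ≤ ‖a‖ * t := by
    refine image_norm_le_of_norm_deriv_right_le_deriv_boundary
      (fun t _ ↦ ((hexp t).sub_const 1).continuousAt.continuousWithinAt)
      (fun t _ ↦ ((hexp t).sub_const 1).hasDerivWithinAt) (by simp)
      (fun t ↦ (hasDerivAt_id t).const_mul ‖a‖) fun t ht ↦ ?_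
    simpa using norm_mul_le_of_le (h t (Ico_subset_Icc_self ht)) le_rfl
  have hquad : ∀ t ∈ Icc (0 : ℝ) 1, ‖exp (t • a) - 1 - t • a‖ ≤ ‖a‖ ^ 2 / 2 * t ^ 2 := by
    have hrem (t : ℝ) : HasDerivAt (fun s : ℝ ↦ exp (s • a) - 1 - s • a)
        ((exp (t • a) - 1) * a) t :=
      ((hexp t).sub_const 1).sub ((hasDerivAt_id t).smul_const a) |>.congr_deriv
        (by rw [sub_mul, one_mul, one_smul])
    refine image_norm_le_of_norm_deriv_right_le_deriv_boundary
      (fun t _ ↦ (hrem t).continuousAt.continuousWithinAt)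
      (fun t _ ↦ (hrem t).hasDerivWithinAt) (by simp)
      (fun t ↦ (hasDerivAt_pow 2 t).const_mul (‖a‖ ^ 2 / 2)) fun t ht ↦ ?_
    calc ‖(exp (t • a) - 1) * a‖ ≤ ‖a‖ * t * ‖a‖ :=
          norm_mul_le_of_le (hlin t (Ico_subset_Icc_self ht)) le_rfl
      _ = _ := by ring
  simpa using hquad 1 (right_mem_Icc.2 zero_le_one)

section CStarAlgebra

variable {A : Type*} [CStarAlgebra A]

theorem norm_exp_sub_one_sub_le_of_mem_skewAdjoint {a : A} (ha : a ∈ skewAdjoint A) :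
    ‖exp a - 1 - a‖ ≤ ‖a‖ ^ 2 / 2 := by
  refine norm_exp_sub_one_sub_le_of_norm_exp_smul_le_one fun t _ ↦ ?_
  let +nondep : NormedAlgebra ℚ A := .restrictScalars ℚ ℂ A
  have hu := exp_mem_unitary_of_mem_skewAdjoint (skewAdjoint.smul_mem t ha)
  rcases subsingleton_or_nontrivial A with hA | hA
  · simp [Subsingleton.elim (exp (t • a)) 0]
  · exact (CStarRing.norm_of_mem_unitary hu).le

variable [PartialOrder A] [StarOrderedRing A]

theorem star_mul_self_sub_le_star_add_mul_add (x r : A) :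
    star x * x - algebraMap ℝ A (2 * (‖x‖ * ‖r‖)) ≤ star (x + r) * (x + r) := by
  set h := star x * r + star r * x
  have hsa : IsSelfAdjoint h := by simp [h, IsSelfAdjoint, add_comm]
  have hnorm : ‖h‖ ≤ 2 * (‖x‖ * ‖r‖) := by
    calc ‖h‖ ≤ ‖star x‖ * ‖r‖ + ‖star r‖ * ‖x‖ :=
          (norm_add_le _ _).trans (add_le_add (norm_mul_le _ _) (norm_mul_le _ _))
      _ = 2 * (‖x‖ * ‖r‖) := by rw [norm_star, norm_star]; ring
  have hcross : -algebraMap ℝ A (2 * (‖x‖ * ‖r‖)) ≤ h :=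
    (neg_le_neg (algebraMap_mono A hnorm)).trans hsa.neg_algebraMap_norm_le_self
  have hexpand : star (x + r) * (x + r) = star x * x + h + star r * r := by
    simp only [h, star_add, add_mul, mul_add]; abel
  rw [hexpand, sub_eq_add_neg]
  exact le_add_of_le_of_nonneg (add_le_add le_rfl hcross) (star_mul_self_nonneg r)

theorem star_mul_self_sub_le_star_exp_sub_one_mul {a : A} (ha : a ∈ skewAdjoint A) :
    star a * a - algebraMap ℝ A (‖a‖ ^ 3) ≤ star (exp a - 1) * (exp a - 1) := by
  have hrem : 2 * (‖a‖ * ‖exp a - 1 - a‖) ≤ ‖a‖ ^ 3 := by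
    nlinarith [norm_exp_sub_one_sub_le_of_mem_skewAdjoint ha, norm_nonneg a]
  calc star a * a - algebraMap ℝ A (‖a‖ ^ 3)
      ≤ star a * a - algebraMap ℝ A (2 * (‖a‖ * ‖exp a - 1 - a‖)) := by gcongr
    _ ≤ star (exp a - 1) * (exp a - 1) := by
        simpa using star_mul_self_sub_le_star_add_mul_add a (exp a - 1 - a)

end CStarAlgebra

namespace Matrix

open scoped ComplexOrder MatrixOrder

theorem mul_re_trace_conjTranspose_mul_self_le_re_trace_mul {𝕜 : Type*} [RCLike 𝕜]
    {m n : Type*} [Fintype m] [Fintype n] [DecidableEq n] {M : Matrix n n 𝕜} {c : ℝ}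
    (hM : algebraMap ℝ (Matrix n n 𝕜) c ≤ M) (B : Matrix n m 𝕜) :
    c * RCLike.re (Bᴴ * B).trace ≤ RCLike.re (M * (B * Bᴴ)).trace := by
  have h := RCLike.nonneg_iff.1
    ((le_iff.1 hM).conjTranspose_mul_mul_same B).trace_nonneg |>.1
  rw [Matrix.mul_sub, Matrix.sub_mul, trace_sub, map_sub, Algebra.algebraMap_eq_smul_one,
    Matrix.mul_smul, Matrix.smul_mul, Matrix.mul_one, trace_smul, RCLike.smul_re,
    Matrix.mul_assoc, trace_mul_comm, sub_nonneg] at h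
  rwa [← Matrix.mul_assoc]

open scoped Matrix.Norms.L2Operator

theorem algebraMap_le_sum_conjTranspose_exp_sub_one_mul {ι m : Type*} [Fintype ι] [Fintype m]
    [DecidableEq m] (A : ι → Matrix m m ℂ) (hA : ∀ k, (A k)ᴴ = -A k) {κ L : ℝ}
    (hAL : ∀ k, ‖A k‖ ≤ L) (hsum : ∑ k, (A k)ᴴ * A k = (κ : ℂ) • 1) (u : ℝ) :
    algebraMap ℝ (Matrix m m ℂ) (u ^ 2 * κ - Fintype.card ι * (|u| * L) ^ 3) ≤
      ∑ k, (exp ((u : ℂ) • A k) - 1)ᴴ * (exp ((u : ℂ) • A k) - 1) := by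
  have hXX : ∑ k, star ((u : ℂ) • A k) * ((u : ℂ) • A k) =
      algebraMap ℝ (Matrix m m ℂ) (u ^ 2 * κ) := by
    simp only [star_smul, Complex.star_def, Complex.conj_ofReal, smul_mul_smul,
      star_eq_conjTranspose, ← Finset.smul_sum, hsum, smul_smul,
      Algebra.algebraMap_eq_smul_one, ← Complex.coe_smul]
    push_cast
    ring_nf
  have hE (k : ι) : star ((u : ℂ) • A k) * ((u : ℂ) • A k) - algebraMap ℝ _ ((|u| * L) ^ 3) ≤
      star (exp ((u : ℂ) • A k) - 1) * (exp ((u : ℂ) • A k) - 1) := by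
    refine le_trans ?_ (star_mul_self_sub_le_star_exp_sub_one_mul ?_)
    · gcongr
      rw [norm_smul, Complex.norm_real, Real.norm_eq_abs]
      exact mul_le_mul_of_nonneg_left (hAL k) (abs_nonneg u)
    · simp [skewAdjoint.mem_iff, star_smul, star_eq_conjTranspose, hA k]
  calc algebraMap ℝ (Matrix m m ℂ) (u ^ 2 * κ - Fintype.card ι * (|u| * L) ^ 3)
      = ∑ k, (star ((u : ℂ) • A k) * ((u : ℂ) • A k) - algebraMap ℝ _ ((|u| * L) ^ 3)) := by
        rw [Finset.sum_sub_distrib, hXX, Finset.sum_const, Finset.card_univ, nsmul_eq_mul,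
          ← map_natCast (algebraMap ℝ (Matrix m m ℂ)), ← map_mul, ← map_sub]
    _ ≤ _ := Finset.sum_le_sum fun k _ ↦ hE k

end Matrix

open scoped ComplexOrder in
theorem hsNorm_sq {d : ℕ} (B : Matrix (Fin d) (Fin d) ℂ) :
    hsNorm B ^ 2 = (Bᴴ * B).trace.re :=
  Real.sq_sqrt (RCLike.nonneg_iff.1 (posSemidef_conjTranspose_mul_self B).trace_nonneg).1

theorem trace_lower_bound_general {n d : ℕ}
    (A : Fin n → Matrix (Fin d) (Fin d) ℂ) (hA : ∀ k, (A k)ᴴ = -(A k))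
    (κ L : ℝ) (hL : 0 ≤ L)
    (hsum : ∑ k, (A k)ᴴ * A k = (κ : ℂ) • (1 : Matrix (Fin d) (Fin d) ℂ))
    (hAL : ∀ k, matOpNorm (A k) ≤ L) (hL2 : L ^ 2 ≤ κ)
    (B : Matrix (Fin d) (Fin d) ℂ) (u : ℝ) :
    hsNorm B ^ 2 * (u ^ 2 * κ) * (1 - n * |u| * L - n * (u ^ 2 / 4) * L ^ 2) ≤
      (Matrix.trace ((∑ k, (NormedSpace.exp ((u : ℂ) • A k) - 1)ᴴ *
          (NormedSpace.exp ((u : ℂ) • A k) - 1)) * (B * Bᴴ))).re := by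
  have htr := mul_re_trace_conjTranspose_mul_self_le_re_trace_mul
    (algebraMap_le_sum_conjTranspose_exp_sub_one_mul A hA hAL hsum u) B
  rw [Fintype.card_fin, RCLike.re_to_complex, RCLike.re_to_complex, ← hsNorm_sq] at htr
  set x := |u| * L
  have hx : 0 ≤ x := mul_nonneg (abs_nonneg u) hL
  have hx2 : x ^ 2 ≤ u ^ 2 * κ := by
    rw [mul_pow, sq_abs]
    exact mul_le_mul_of_nonneg_left hL2 (sq_nonneg u)
  have hcubic : n * x ^ 3 ≤ u ^ 2 * κ * (n * x + n * (u ^ 2 / 4) * L ^ 2) := by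
    have : 0 ≤ u ^ 2 * κ * (n * (u ^ 2 / 4) * L ^ 2) :=
      mul_nonneg ((sq_nonneg x).trans hx2) (by positivity)
    nlinarith [mul_le_mul_of_nonneg_left (mul_le_mul_of_nonneg_left hx2 hx) n.cast_nonneg]
  nlinarith [mul_le_mul_of_nonneg_left hcubic (sq_nonneg (hsNorm B))]

/-- The key lower bound (display (lowerbound)) in the proof of Proposition 3.2: if
`A₁, …, Aₙ` are skew-Hermitian, `Σ Aₖᴴ Aₖ = κ·I`, `‖Aₖ‖ ≤ L` and `L² ≤ κ`, then for every
matrix `B` and real `u`,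
`Re tr( Σ (exp(uAₖ) − I)ᴴ(exp(uAₖ) − I) · BBᴴ ) ≥ ‖B‖²_HS u²κ (1 − n|u|L − n(u²/4)L²)`. -/
theorem trace_lower_bound {n d : ℕ} (hn : 1 ≤ n) (hd : 1 ≤ d)
    (A : Fin n → Matrix (Fin d) (Fin d) ℂ) (hA : ∀ k, (A k)ᴴ = -(A k))
    (κ L : ℝ) (hκ : 0 ≤ κ) (hL : 0 ≤ L)
    (hsum : ∑ k, (A k)ᴴ * A k = (κ : ℂ) • (1 : Matrix (Fin d) (Fin d) ℂ))
    (hAL : ∀ k, matOpNorm (A k) ≤ L) (hL2 : L ^ 2 ≤ κ)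
    (B : Matrix (Fin d) (Fin d) ℂ) (u : ℝ) :
    hsNorm B ^ 2 * (u ^ 2 * κ) * (1 - n * |u| * L - n * (u ^ 2 / 4) * L ^ 2) ≤
      (Matrix.trace ((∑ k, (NormedSpace.exp ((u : ℂ) • A k) - 1)ᴴ *
          (NormedSpace.exp ((u : ℂ) • A k) - 1)) * (B * Bᴴ))).re :=
  trace_lower_bound_general A hA κ L hL hsum hAL hL2 B u
end

section
/- Let G be a compact metrizable topological group, ρ a metric on G inducing its topology that is bi-invariant (ρ(zx, zy) = ρ(x,y) = ρ(xz, yz) for all x,y,z ∈ G), and μ the Haar probability measure on G. Let n, c > 0 be real numbers such that μ(B_ρ(x,r)) ≥ c·rⁿ for every x ∈ G and every 0 < r ≤ 1, where B_ρ(x,r) is the open ρ-ball. Let 0 < p ≤ 1, let ν be a Borel probability measure on G, and let q ≥ 0 be such that for every f ∈ L²(μ) with ∫_G f dμ = 0 one has ( ∫_G | ∫_G f(xy) dν(y) |² dμ(x) )^{1/2} ≤ q · ( ∫_G |f|² dμ )^{1/2}. Then there exists a constant C > 0 depending only on c, n, p and the diameter of (G,ρ) such that for every function f : G → ℝ satisfying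 |f(x) − f(y)| ≤ ρ(x,y)^p for all x,y ∈ G, one has | ∫_G f dν − ∫_G f dμ | ≤ C · q^{2p/(n+2p)}. -/
/-!
Replace `f` by `g = f - ∫ f dμ`, which has `μ`-mean zero and `|g| ≤ K = (diam G) ^ p`, so
`‖T_ν g‖₂ ≤ q K`. Let `B` be the ball of radius `r` about `1`, of measure `a ≥ c rⁿ`. By right
invariance of the metric, `g (x y)` is within `r ^ p` of `g y` for `x ∈ B`, so by Fubini
`a ∫ g dν` is within `a r ^ p` of `∫_B T_ν g dμ`, which Cauchy–Schwarz bounds by `√a q K`.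
Hence `|∫ g dν| ≤ r ^ p + q K / √(c rⁿ)`, and `r = q ^ (2 / (n + 2p))` balances the two terms
(for `q ≥ 1` the bound `|∫ g dν| ≤ K` suffices, and for `q = 0` one lets `r → 0`).
-/

open MeasureTheory Filter Topology

lemma continuous_of_abs_sub_le_dist_rpow {X : Type*} [PseudoMetricSpace X] {f : X → ℝ} {p : ℝ}
    (hp : 0 < p) (hf : ∀ x y, |f x - f y| ≤ dist x y ^ p) : Continuous f := by
  refine Metric.continuous_iff.mpr fun x ε hε => ⟨ε ^ p⁻¹, by positivity, fun y hy => ?_⟩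
  calc dist (f y) (f x) ≤ dist y x ^ p := hf y x
    _ < (ε ^ p⁻¹) ^ p := by gcongr
    _ = ε := Real.rpow_inv_rpow hε.le hp.ne'

section CompactSpace

variable {X : Type*} [TopologicalSpace X] [CompactSpace X] [MeasurableSpace X]
  [OpensMeasurableSpace X] {μ : Measure X} [IsFiniteMeasure μ] {f : X → ℝ}

lemma Continuous.memLp_of_compactSpace (hf : Continuous f) (e : ENNReal) : MemLp f e μ :=
  (hf.memLp_top_of_hasCompactSupport (.of_compactSpace f) μ).mono_exponent le_top

lemma Continuous.integrable_of_compactSpace (hf : Continuous f) : Integrable f μ :=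
  hf.integrable_of_hasCompactSupport (.of_compactSpace f)

end CompactSpace

section ProbabilityMeasure

variable {X : Type*} [MeasurableSpace X] {μ : Measure X} [IsProbabilityMeasure μ] {f : X → ℝ}
  {K : ℝ}

lemma abs_sub_integral_le_of_abs_sub_le (hf : Integrable f μ) {x : X}
    (hK : ∀ y, |f x - f y| ≤ K) : |f x - ∫ y, f y ∂μ| ≤ K := by
  have h : f x - ∫ y, f y ∂μ = ∫ y, (f x - f y) ∂μ := by
    rw [integral_sub (integrable_const _) hf, integral_const, probReal_univ, one_smul]
  simpa [h] using norm_integral_le_of_norm_le_const (μ := μ) (f := fun y => f x - f y)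
    (.of_forall hK)

lemma sqrt_integral_sq_le_of_abs_le (hK : 0 ≤ K) (hf : ∀ x, |f x| ≤ K) :
    √(∫ x, f x ^ 2 ∂μ) ≤ K := by
  refine Real.sqrt_le_iff.mpr ⟨hK, ?_⟩
  calc ∫ x, f x ^ 2 ∂μ ≤ ∫ _, K ^ 2 ∂μ :=
        integral_mono_of_nonneg (.of_forall fun x => sq_nonneg _) (integrable_const _)
          (.of_forall fun x => sq_le_sq' (abs_le.mp (hf x)).1 (abs_le.mp (hf x)).2)
    _ = K ^ 2 := by simp

end ProbabilityMeasure

lemma abs_setIntegral_le_sqrt_measureReal_mul {α : Type*} [MeasurableSpace α] {μ : Measure α}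
    [IsFiniteMeasure μ] {h : α → ℝ} (hh : MemLp h 2 μ) (s : Set α) :
    |∫ x in s, h x ∂μ| ≤ √(μ.real s) * √(∫ x, h x ^ 2 ∂μ) := by
  have hcs := integral_mul_norm_le_Lp_mul_Lq (μ := μ.restrict s) (g := fun _ => (1 : ℝ))
    Real.HolderConjugate.two_two (by simpa using hh.restrict s) (by simpa using memLp_const 1)
  have hsq : ∀ x, ‖h x‖ ^ (2 : ℝ) = h x ^ 2 := fun x => by
    rw [Real.rpow_two, Real.norm_eq_abs, sq_abs]
  have hmono : ∫ x in s, h x ^ 2 ∂μ ≤ ∫ x, h x ^ 2 ∂μ :=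
    setIntegral_le_integral (by simpa using hh.integrable_sq) (.of_forall fun x => sq_nonneg _)
  simp only [hsq, norm_one, mul_one, Real.one_rpow, integral_const, smul_eq_mul,
    measureReal_restrict_apply_univ] at hcs
  calc |∫ x in s, h x ∂μ| ≤ ∫ x in s, ‖h x‖ ∂μ := norm_integral_le_integral_norm h
    _ ≤ (∫ x in s, h x ^ 2 ∂μ) ^ (1 / (2 : ℝ)) * (μ.real s) ^ (1 / (2 : ℝ)) := hcs
    _ ≤ √(∫ x, h x ^ 2 ∂μ) * √(μ.real s) := by
        rw [Real.sqrt_eq_rpow, Real.sqrt_eq_rpow]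
        gcongr
    _ = _ := mul_comm _ _

section TopologicalGroup

variable {G : Type*} [TopologicalSpace G] [Group G] [IsTopologicalGroup G] [CompactSpace G]
  [SecondCountableTopology G] [MeasurableSpace G] [BorelSpace G] {μ ν : Measure G}
  [IsFiniteMeasure μ] [IsProbabilityMeasure ν] {g : G → ℝ}

lemma abs_measureReal_mul_integral_sub_setIntegral_le (hg : Continuous g) {B : Set G} {ε : ℝ}
    (hε : ∀ x ∈ B, ∀ y, |g y - g (x * y)| ≤ ε) :
    |μ.real B * ∫ y, g y ∂ν - ∫ x in B, ∫ y, g (x * y) ∂ν ∂μ| ≤ μ.real B * ε := by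
  have hprod : Integrable (Function.uncurry fun x y => g (x * y)) ((μ.restrict B).prod ν) :=
    (hg.comp continuous_mul).integrable_of_compactSpace
  have hswap := integral_integral_swap hprod
  have hy : ∀ y, |μ.real B * g y - ∫ x in B, g (x * y) ∂μ| ≤ μ.real B * ε := fun y => by
    have hint : Integrable (fun x => g (x * y)) (μ.restrict B) :=
      (hg.comp (continuous_mul_const y)).integrable_of_compactSpace
    rw [← smul_eq_mul, ← setIntegral_const, ← integral_sub (integrable_const _) hint, mul_comm]
    exact norm_setIntegral_le_of_norm_le_const (f := fun x => g y - g (x * y))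
      (measure_lt_top μ B) fun x hx => hε x hx y
  have hint : Integrable (fun y => ∫ x in B, g (x * y) ∂μ) ν := hprod.integral_prod_right
  rw [hswap, ← integral_const_mul, ← integral_sub (hg.integrable_of_compactSpace.const_mul _) hint]
  simpa using norm_integral_le_of_norm_le_const (μ := ν)
    (f := fun y => μ.real B * g y - ∫ x in B, g (x * y) ∂μ) (.of_forall hy)

end TopologicalGroup

section MetricGroup

variable {G : Type*} [MetricSpace G] [Group G] [IsTopologicalGroup G] [CompactSpace G]
  [MeasurableSpace G] [BorelSpace G] {μ ν : Measure G} [IsFiniteMeasure μ]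
  [IsProbabilityMeasure ν]

lemma continuous_integral_comp_mul {g : G → ℝ} (hg : Continuous g) :
    Continuous fun x => ∫ y, g (x * y) ∂ν := by
  simpa using continuous_parametric_integral_of_continuous (μ := ν)
    (f := fun x y => g (x * y)) (hg.comp continuous_mul) isCompact_univ

lemma abs_integral_le_rpow_add_div_sqrt_measureReal_ball
    (hright : ∀ x y z : G, dist (x * z) (y * z) = dist x y) {g : G → ℝ} {p : ℝ} (hp : 0 < p)
    (hg : ∀ x y, |g x - g y| ≤ dist x y ^ p) {Q : ℝ}
    (hQ : √(∫ x, (∫ y, g (x * y) ∂ν) ^ 2 ∂μ) ≤ Q) {r : ℝ}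
    (hr : 0 < μ.real (Metric.ball 1 r)) :
    |∫ y, g y ∂ν| ≤ r ^ p + Q / √(μ.real (Metric.ball 1 r)) := by
  set a := μ.real (Metric.ball 1 r)
  have hgc := continuous_of_abs_sub_le_dist_rpow hp hg
  have hshift : ∀ x ∈ Metric.ball (1 : G) r, ∀ y, |g y - g (x * y)| ≤ r ^ p := fun x hx y => by
    refine (hg _ _).trans (Real.rpow_le_rpow dist_nonneg ?_ hp.le)
    calc dist y (x * y) = dist (1 * y) (x * y) := by rw [one_mul]
      _ = dist x 1 := by rw [hright, dist_comm]
      _ ≤ r := (Metric.mem_ball.mp hx).le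
  have hfubini := abs_measureReal_mul_integral_sub_setIntegral_le (μ := μ) (ν := ν) hgc hshift
  have hcs := abs_setIntegral_le_sqrt_measureReal_mul (μ := μ)
    ((continuous_integral_comp_mul (ν := ν) hgc).memLp_of_compactSpace 2) (Metric.ball 1 r)
  have hbound : a * |∫ y, g y ∂ν| ≤ a * r ^ p + √a * Q := by
    rw [← abs_of_pos hr, ← abs_mul, abs_of_pos hr]
    calc |a * ∫ y, g y ∂ν|
        ≤ |a * ∫ y, g y ∂ν - ∫ x in Metric.ball 1 r, ∫ y, g (x * y) ∂ν ∂μ|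
          + |∫ x in Metric.ball 1 r, ∫ y, g (x * y) ∂ν ∂μ| :=
          sub_le_iff_le_add.mp (abs_sub_abs_le_abs_sub _ _)
      _ ≤ a * r ^ p + √a * Q := by gcongr; exact hcs.trans (by gcongr)
  refine le_of_mul_le_mul_left (hbound.trans_eq ?_) hr
  rw [mul_add, mul_div_left_comm, Real.div_sqrt, mul_comm Q]

end MetricGroup

lemma nonpos_of_forall_le_rpow {X p : ℝ} (hp : 0 < p) (h : ∀ r : ℝ, 0 < r → r ≤ 1 → X ≤ r ^ p) :
    X ≤ 0 := by
  have hlim : Tendsto (fun r : ℝ => r ^ p) (𝓝[>] 0) (𝓝 0) := by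
    simpa [Real.zero_rpow hp.ne'] using
      ((Real.continuousAt_rpow_const 0 p (Or.inr hp.le)).tendsto).mono_left nhdsWithin_le_nhds
  exact ge_of_tendsto hlim (eventually_of_mem (Ioc_mem_nhdsGT one_pos) fun r hr => h r hr.1 hr.2)

lemma rpow_balanced_radius {n p q : ℝ} (hn : 0 ≤ n) (hp : 0 < p) (hq : 0 < q) (c : ℝ) :
    (q ^ (2 / (n + 2 * p))) ^ p = q ^ (2 * p / (n + 2 * p)) ∧
      q / √(c * (q ^ (2 / (n + 2 * p))) ^ n) = (√c)⁻¹ * q ^ (2 * p / (n + 2 * p)) := by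
  have hnp : 0 < n + 2 * p := by linarith
  have hsqrt : √((q ^ (2 / (n + 2 * p))) ^ n) = q ^ (n / (n + 2 * p)) := by
    rw [← Real.rpow_mul hq.le, Real.sqrt_eq_rpow, ← Real.rpow_mul hq.le]
    congr 1; field_simp
  refine ⟨by rw [← Real.rpow_mul hq.le]; congr 1; field_simp, ?_⟩
  have hexp : 2 * p / (n + 2 * p) = 1 - n / (n + 2 * p) := by field_simp; ring
  rw [Real.sqrt_mul' _ (by positivity), hsqrt, div_mul_eq_div_div_swap, div_eq_inv_mul, hexp,
    Real.rpow_sub hq, Real.rpow_one]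

lemma le_mul_rpow_of_forall_le_rpow_add_div_sqrt {X K c n p q : ℝ} (hn : 0 ≤ n) (hc : 0 < c)
    (hp : 0 < p) (hK : 0 ≤ K) (hq : 0 ≤ q) (hXK : X ≤ K)
    (hX : ∀ r : ℝ, 0 < r → r ≤ 1 → X ≤ r ^ p + q * K / √(c * r ^ n)) :
    X ≤ (1 + K * (1 + (√c)⁻¹)) * q ^ (2 * p / (n + 2 * p)) := by
  have hα : 0 < 2 * p / (n + 2 * p) := by positivity
  rcases hq.eq_or_lt with rfl | hq
  · rw [Real.zero_rpow hα.ne', mul_zero]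
    exact nonpos_of_forall_le_rpow hp fun r hr hr1 => by simpa using hX r hr hr1
  rcases le_or_gt 1 q with hq1 | hq1
  · calc X ≤ K * 1 := by rw [mul_one]; exact hXK
      _ ≤ (1 + K * (1 + (√c)⁻¹)) * q ^ (2 * p / (n + 2 * p)) := by
          gcongr
          · nlinarith [inv_nonneg.mpr (Real.sqrt_nonneg c)]
          · exact Real.one_le_rpow hq1 hα.le
  obtain ⟨hrp, hrq⟩ := rpow_balanced_radius hn hp hq c
  have hr : 0 < q ^ (2 / (n + 2 * p)) := Real.rpow_pos_of_pos hq _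
  have hr1 : q ^ (2 / (n + 2 * p)) ≤ 1 := Real.rpow_le_one hq.le hq1.le (by positivity)
  calc X ≤ (q ^ (2 / (n + 2 * p))) ^ p + K * (q / √(c * (q ^ (2 / (n + 2 * p))) ^ n)) := by
        rw [← mul_div_assoc, mul_comm K]; exact hX _ hr hr1
    _ = (1 + K * (√c)⁻¹) * q ^ (2 * p / (n + 2 * p)) := by rw [hrp, hrq]; ring
    _ ≤ (1 + K * (1 + (√c)⁻¹)) * q ^ (2 * p / (n + 2 * p)) := by gcongr; linarith

theorem trivial_spectral_gap_estimate_general {G : Type*} [MetricSpace G] [Group G]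
    [IsTopologicalGroup G] [CompactSpace G] [MeasurableSpace G] [BorelSpace G]
    (hbi : ∀ x y z : G, dist (z * x) (z * y) = dist x y ∧ dist (x * z) (y * z) = dist x y)
    (μ : Measure G) [IsProbabilityMeasure μ]
    (n c p : ℝ) (hn : 0 < n) (hc : 0 < c) (hp : 0 < p)
    (hball : ∀ (x : G) (r : ℝ), 0 < r → r ≤ 1 →
      c * r ^ n ≤ (μ (Metric.ball x r)).toReal) :
    ∃ C > 0, ∀ (ν : Measure G), IsProbabilityMeasure ν → ∀ q : ℝ, 0 ≤ q →
      (∀ f : G → ℝ, MemLp f 2 μ → ∫ x, f x ∂μ = 0 →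
        Real.sqrt (∫ x, (∫ y, f (x * y) ∂ν) ^ 2 ∂μ) ≤
          q * Real.sqrt (∫ x, f x ^ 2 ∂μ)) →
      ∀ f : G → ℝ, (∀ x y : G, |f x - f y| ≤ dist x y ^ p) →
        |∫ x, f x ∂ν - ∫ x, f x ∂μ| ≤ C * q ^ (2 * p / (n + 2 * p)) := by
  set K := Metric.diam (Set.univ : Set G) ^ p
  have hK : 0 ≤ K := by positivity
  refine ⟨1 + K * (1 + (√c)⁻¹), by positivity, fun ν _ q hq hT f hf => ?_⟩
  have hfc := continuous_of_abs_sub_le_dist_rpow hp hf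
  set g := fun x => f x - ∫ x, f x ∂μ
  have hg : ∀ x y, |g x - g y| ≤ dist x y ^ p := fun x y => by simpa [g] using hf x y
  have hgK : ∀ x, |g x| ≤ K := fun x =>
    abs_sub_integral_le_of_abs_sub_le hfc.integrable_of_compactSpace fun y => (hf x y).trans
      (Real.rpow_le_rpow dist_nonneg
        (Metric.dist_le_diam_of_mem isCompact_univ.isBounded trivial trivial) hp.le)
  have hgc : Continuous g := hfc.sub continuous_const
  have hgμ : ∫ x, g x ∂μ = 0 := by
    simp [g, integral_sub hfc.integrable_of_compactSpace (integrable_const _)]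
  have hgν : ∫ x, g x ∂ν = ∫ x, f x ∂ν - ∫ x, f x ∂μ := by
    simp [g, integral_sub hfc.integrable_of_compactSpace (integrable_const _)]
  have hTg : √(∫ x, (∫ y, g (x * y) ∂ν) ^ 2 ∂μ) ≤ q * K :=
    (hT g (hgc.memLp_of_compactSpace 2) hgμ).trans
      (mul_le_mul_of_nonneg_left (sqrt_integral_sq_le_of_abs_le hK hgK) hq)
  rw [← hgν]
  refine le_mul_rpow_of_forall_le_rpow_add_div_sqrt hn.le hc hp hK hq ?_ fun r hr hr1 => ?_
  · simpa using norm_integral_le_of_norm_le_const (μ := ν) (f := g) (.of_forall hgK)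
  · have hμr : c * r ^ n ≤ μ.real (Metric.ball 1 r) := hball 1 r hr hr1
    refine (abs_integral_le_rpow_add_div_sqrt_measureReal_ball (fun x y z => (hbi x y z).2) hp hg
      hTg (lt_of_lt_of_le (by positivity) hμr)).trans ?_
    gcongr

/-- The 'trivial estimate' (trivialqnu) of Section 2.3.1 in dual form: on a compact metrizable
group with bi-invariant metric and Haar probability measure `μ` whose balls satisfy
`μ(B(x,r)) ≥ c rⁿ`, if the Markov operator of `ν` has norm at most `q` on mean-zero `L²`, then
`|∫ f dν − ∫ f dμ| ≤ C q^{2p/(n+2p)}` for every `p`-Hölder function `f` with constant `1`. -/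
theorem trivial_spectral_gap_estimate {G : Type*} [MetricSpace G] [Group G]
    [IsTopologicalGroup G] [CompactSpace G] [MeasurableSpace G] [BorelSpace G]
    (hbi : ∀ x y z : G, dist (z * x) (z * y) = dist x y ∧ dist (x * z) (y * z) = dist x y)
    (μ : Measure G) [μ.IsHaarMeasure] [IsProbabilityMeasure μ]
    (n c p : ℝ) (hn : 0 < n) (hc : 0 < c) (hp : 0 < p) (hp1 : p ≤ 1)
    (hball : ∀ (x : G) (r : ℝ), 0 < r → r ≤ 1 →
      c * r ^ n ≤ (μ (Metric.ball x r)).toReal) :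
    ∃ C > 0, ∀ (ν : Measure G), IsProbabilityMeasure ν → ∀ q : ℝ, 0 ≤ q →
      (∀ f : G → ℝ, MemLp f 2 μ → ∫ x, f x ∂μ = 0 →
        Real.sqrt (∫ x, (∫ y, f (x * y) ∂ν) ^ 2 ∂μ) ≤
          q * Real.sqrt (∫ x, f x ^ 2 ∂μ)) →
      ∀ f : G → ℝ, (∀ x y : G, |f x - f y| ≤ dist x y ^ p) →
        |∫ x, f x ∂ν - ∫ x, f x ∂μ| ≤ C * q ^ (2 * p / (n + 2 * p)) :=
  trivial_spectral_gap_estimate_general hbi μ n c p hn hc hp hball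
end

section
/- Let (X, d) be a compact metric space, μ a Borel probability measure on X, and let n, c₂ > 0 be real numbers such that μ(B(x,r)) ≤ c₂·rⁿ for every x ∈ X and every r > 0, where B(x,r) is the open ball. Let g : [0,∞) → [0,∞) be nondecreasing, subadditive, with lim_{t→0⁺} g(t) = 0. Then there exists a constant c > 0 depending only on c₂ and n such that for every integer N ≥ 1 and every Borel probability measure ν on X whose support contains at most N points, W_g(ν, μ) ≥ c · g(N^{−1/n}). -/
/-! If `ν` sits on at most `N` points, the balls of radius `r = (2 c₂ N)^(-1/n)` around them
carry at most half of the mass of `μ`. Hence every coupling of `ν` with `μ` moves mass at least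
`1/2` over a distance at least `r`, at cost at least `g r / 2`. Since `N^(-1/n) ≤ m r` with
`m = ⌈(2 c₂)^(1/n)⌉` independent of `N`, subadditivity gives `g (N^(-1/n)) ≤ m g r`. -/

open MeasureTheory

/-- The generalized Wasserstein distance `W_g`: the infimum, over all couplings `θ` of `ν₁`
and `ν₂`, of `∫ g(d(x,y)) dθ(x,y)`. -/
noncomputable def Wg {X : Type*} [MetricSpace X] [MeasurableSpace X]
    (g : ℝ → ℝ) (ν₁ ν₂ : Measure X) : ℝ :=
  sInf { r : ℝ | ∃ θ : Measure (X × X), IsProbabilityMeasure θ ∧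
    θ.map Prod.fst = ν₁ ∧ θ.map Prod.snd = ν₂ ∧ r = ∫ q, g (dist q.1 q.2) ∂θ }

open Metric

section Subadditive

variable {g : ℝ → ℝ}

theorem apply_nat_mul_le_of_subadditive
    (hgsub : ∀ s t : ℝ, 0 ≤ s → 0 ≤ t → g (s + t) ≤ g s + g t)
    {k : ℕ} (hk : 1 ≤ k) {t : ℝ} (ht : 0 ≤ t) : g (k * t) ≤ k * g t := by
  induction k, hk using Nat.le_induction with
  | base => simp
  | succ k hk ih =>
    calc g ((k + 1 : ℕ) * t) = g (k * t + t) := by push_cast; ring_nf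
      _ ≤ g (k * t) + g t := hgsub _ _ (by positivity) ht
      _ ≤ k * g t + g t := by linarith
      _ = (k + 1 : ℕ) * g t := by push_cast; ring

theorem apply_le_nat_mul_of_le_nat_mul
    (hgmono : ∀ s t : ℝ, 0 ≤ s → s ≤ t → g s ≤ g t)
    (hgsub : ∀ s t : ℝ, 0 ≤ s → 0 ≤ t → g (s + t) ≤ g s + g t)
    {k : ℕ} (hk : 1 ≤ k) {s t : ℝ} (hs : 0 ≤ s) (ht : 0 ≤ t) (hst : s ≤ k * t) :
    g s ≤ k * g t :=
  (hgmono s _ hs hst).trans (apply_nat_mul_le_of_subadditive hgsub hk ht)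

end Subadditive

theorem le_Wg_of_forall_coupling {X : Type*} [MetricSpace X] [MeasurableSpace X]
    {g : ℝ → ℝ} {ν₁ ν₂ : Measure X} [IsProbabilityMeasure ν₁] [IsProbabilityMeasure ν₂] {b : ℝ}
    (h : ∀ θ : Measure (X × X), IsProbabilityMeasure θ → θ.map Prod.fst = ν₁ →
      θ.map Prod.snd = ν₂ → b ≤ ∫ q, g (dist q.1 q.2) ∂θ) :
    b ≤ Wg g ν₁ ν₂ := by
  refine le_csInf ⟨_, ν₁.prod ν₂, inferInstance, ?_, ?_, rfl⟩ ?_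
  · simp [Measure.map_fst_prod]
  · simp [Measure.map_snd_prod]
  · rintro _ ⟨θ, hθ, h₁, h₂, rfl⟩
    exact h θ hθ h₁ h₂

theorem measure_compl_prod_compl_le_of_map_eq {α β : Type*} [MeasurableSpace α]
    [MeasurableSpace β] {θ : Measure (α × β)} {ν : Measure α} {μ : Measure β}
    (h₁ : θ.map Prod.fst = ν) (h₂ : θ.map Prod.snd = μ) {S : Set α} {U : Set β}
    (hS : MeasurableSet S) (hU : MeasurableSet U) (hνS : ν Sᶜ = 0) :
    θ (S ×ˢ Uᶜ)ᶜ ≤ μ U := by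
  have hcover : (S ×ˢ Uᶜ)ᶜ ⊆ Prod.fst ⁻¹' Sᶜ ∪ Prod.snd ⁻¹' U := by
    rintro ⟨x, y⟩ hxy
    simp only [Set.mem_compl_iff, Set.mem_prod, not_and_or, not_not] at hxy
    exact hxy
  calc θ (S ×ˢ Uᶜ)ᶜ ≤ θ (Prod.fst ⁻¹' Sᶜ) + θ (Prod.snd ⁻¹' U) :=
        (measure_mono hcover).trans (measure_union_le _ _)
    _ = μ U := by
      rw [← Measure.map_apply measurable_fst hS.compl, ← Measure.map_apply measurable_snd hU,
        h₁, h₂, hνS, zero_add]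

section Coupling

variable {X : Type*} [MetricSpace X] [MeasurableSpace X]

theorem one_sub_measureReal_biUnion_ball_le_measureReal_dist_ge [OpensMeasurableSpace X]
    {θ : Measure (X × X)} [IsProbabilityMeasure θ] {ν μ : Measure X} [IsProbabilityMeasure ν]
    (h₁ : θ.map Prod.fst = ν) (h₂ : θ.map Prod.snd = μ) {S : Finset X} (hνS : ν S = 1)
    (r : ℝ) :
    1 - μ.real (⋃ x ∈ S, ball x r) ≤ θ.real {q | r ≤ dist q.1 q.2} := by
  set U := ⋃ x ∈ S, ball x r
  have hU : MeasurableSet U := (isOpen_biUnion fun x _ => isOpen_ball).measurableSet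
  have hfar : (S : Set X) ×ˢ Uᶜ ⊆ {q | r ≤ dist q.1 q.2} := by
    rintro ⟨x, y⟩ ⟨hx, hy⟩
    by_contra hlt
    exact hy (Set.mem_biUnion hx (mem_ball.2 (by simpa [dist_comm] using hlt)))
  have hθ : θ.real ((S : Set X) ×ˢ Uᶜ)ᶜ ≤ μ.real U := by
    have : IsProbabilityMeasure μ := h₂ ▸ Measure.isProbabilityMeasure_map measurable_snd.aemeasurable
    exact ENNReal.toReal_mono (measure_ne_top _ _) <| measure_compl_prod_compl_le_of_map_eq h₁ h₂
      S.measurableSet hU ((prob_compl_eq_zero_iff S.measurableSet).2 hνS)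
  rw [measureReal_compl (S.measurableSet.prod hU.compl), probReal_univ] at hθ
  linarith [measureReal_mono (μ := θ) hfar]

variable [CompactSpace X] [BorelSpace X] {g : ℝ → ℝ}

theorem integrable_apply_dist (θ : Measure (X × X)) [IsFiniteMeasure θ]
    (hg0 : ∀ t : ℝ, 0 ≤ t → 0 ≤ g t) (hgmono : ∀ s t : ℝ, 0 ≤ s → s ≤ t → g s ≤ g t) :
    Integrable (fun q : X × X => g (dist q.1 q.2)) θ := by
  obtain ⟨C, hC⟩ := isBounded_iff.1 (isCompact_univ (X := X)).isBounded
  have hG : Monotone fun s => g (max s 0) := fun s u hsu =>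
    hgmono _ _ (le_max_right _ _) (max_le_max hsu le_rfl)
  have hmeas : Measurable fun q : X × X => g (max (dist q.1 q.2) 0) :=
    hG.measurable.comp (continuous_fst.dist continuous_snd).measurable
  simp only [max_eq_left dist_nonneg] at hmeas
  refine .of_bound hmeas.aestronglyMeasurable (g C) (.of_forall fun q => ?_)
  rw [Real.norm_of_nonneg (hg0 _ dist_nonneg)]
  exact hgmono _ _ dist_nonneg (hC trivial trivial)

theorem mul_measureReal_dist_ge_le_integral (θ : Measure (X × X)) [IsFiniteMeasure θ]
    (hg0 : ∀ t : ℝ, 0 ≤ t → 0 ≤ g t) (hgmono : ∀ s t : ℝ, 0 ≤ s → s ≤ t → g s ≤ g t)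
    {r : ℝ} (hr : 0 ≤ r) :
    g r * θ.real {q | r ≤ dist q.1 q.2} ≤ ∫ q, g (dist q.1 q.2) ∂θ := by
  have hsub : {q : X × X | r ≤ dist q.1 q.2} ⊆ {q | g r ≤ g (dist q.1 q.2)} :=
    fun q hq => hgmono _ _ hr hq
  calc g r * θ.real {q | r ≤ dist q.1 q.2} ≤ g r * θ.real {q | g r ≤ g (dist q.1 q.2)} :=
        mul_le_mul_of_nonneg_left (measureReal_mono hsub) (hg0 r hr)
    _ ≤ _ := mul_meas_ge_le_integral_of_nonneg (.of_forall fun q => hg0 _ dist_nonneg)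
        (integrable_apply_dist θ hg0 hgmono) _

theorem half_apply_le_Wg_of_measureReal_biUnion_ball_le {μ ν : Measure X}
    [IsProbabilityMeasure μ] [IsProbabilityMeasure ν]
    (hg0 : ∀ t : ℝ, 0 ≤ t → 0 ≤ g t) (hgmono : ∀ s t : ℝ, 0 ≤ s → s ≤ t → g s ≤ g t)
    {S : Finset X} (hνS : ν S = 1) {r : ℝ} (hr : 0 ≤ r)
    (hballs : μ.real (⋃ x ∈ S, ball x r) ≤ 1 / 2) :
    g r / 2 ≤ Wg g ν μ := by
  refine le_Wg_of_forall_coupling fun θ hθ h₁ h₂ => ?_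
  calc g r / 2 ≤ g r * (1 - μ.real (⋃ x ∈ S, ball x r)) := by
        nlinarith [hg0 r hr]
    _ ≤ g r * θ.real {q | r ≤ dist q.1 q.2} := mul_le_mul_of_nonneg_left
        (one_sub_measureReal_biUnion_ball_le_measureReal_dist_ge h₁ h₂ hνS r) (hg0 r hr)
    _ ≤ _ := mul_measureReal_dist_ge_le_integral θ hg0 hgmono hr

end Coupling

theorem rpow_neg_one_div_rpow {x n : ℝ} (hx : 0 ≤ x) (hn : n ≠ 0) :
    (x ^ (-(1 / n))) ^ n = x⁻¹ := by
  rw [← Real.rpow_mul hx, neg_mul, one_div_mul_cancel hn, Real.rpow_neg_one]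

theorem rpow_neg_le_ceil_rpow_mul_mul_rpow_neg {x y : ℝ} (hx : 0 < x) (hy : 0 ≤ y) (p : ℝ) :
    y ^ (-p) ≤ ⌈x ^ p⌉₊ * (x * y) ^ (-p) := by
  have hcancel : x ^ p * x ^ (-p) = 1 := by
    rw [← Real.rpow_add hx, add_neg_cancel, Real.rpow_zero]
  calc y ^ (-p) = x ^ p * (x * y) ^ (-p) := by
        rw [Real.mul_rpow hx.le hy, ← mul_assoc, hcancel, one_mul]
    _ ≤ ⌈x ^ p⌉₊ * (x * y) ^ (-p) := by gcongr; exact Nat.le_ceil _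

theorem Wg_lower_bound_finitely_supported_general {X : Type*} [MetricSpace X]
    [CompactSpace X] [MeasurableSpace X] [BorelSpace X]
    (μ : Measure X) [IsProbabilityMeasure μ]
    (n c₂ : ℝ) (hn : 0 < n) (hc₂ : 0 < c₂)
    (hball : ∀ (x : X) (r : ℝ), 0 < r → (μ (Metric.ball x r)).toReal ≤ c₂ * r ^ n)
    (g : ℝ → ℝ) (hg0 : ∀ t : ℝ, 0 ≤ t → 0 ≤ g t)
    (hgmono : ∀ s t : ℝ, 0 ≤ s → s ≤ t → g s ≤ g t)
    (hgsub : ∀ s t : ℝ, 0 ≤ s → 0 ≤ t → g (s + t) ≤ g s + g t) :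
    ∃ c > 0, ∀ N : ℕ, 1 ≤ N → ∀ ν : Measure X, IsProbabilityMeasure ν →
      (∃ S : Finset X, S.card ≤ N ∧ ν ↑S = 1) →
      c * g ((N : ℝ) ^ (-(1 / n))) ≤ Wg g ν μ := by
  set m : ℕ := ⌈(2 * c₂) ^ (1 / n)⌉₊
  have hm : 1 ≤ m := Nat.one_le_ceil_iff.2 (by positivity)
  refine ⟨1 / (2 * m), by positivity, ?_⟩
  rintro N hN ν hν ⟨S, hScard, hνS⟩
  have hNpos : (0 : ℝ) < N := by exact_mod_cast hN
  set r : ℝ := (2 * c₂ * N) ^ (-(1 / n))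
  have hr : 0 < r := by positivity
  have hballs : μ.real (⋃ x ∈ S, ball x r) ≤ 1 / 2 :=
    calc μ.real (⋃ x ∈ S, ball x r) ≤ S.card * (c₂ * r ^ n) :=
          (measureReal_biUnion_finset_le S _).trans <|
            (Finset.sum_le_card_nsmul S _ _ fun x _ => hball x r hr).trans_eq (nsmul_eq_mul _ _)
      _ ≤ N * (c₂ * r ^ n) := by gcongr
      _ = 1 / 2 := by rw [rpow_neg_one_div_rpow (by positivity) hn.ne']; field_simp
  have hgN : g ((N : ℝ) ^ (-(1 / n))) ≤ m * g r :=
    apply_le_nat_mul_of_le_nat_mul hgmono hgsub hm (by positivity) hr.le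
      (rpow_neg_le_ceil_rpow_mul_mul_rpow_neg (by positivity) hNpos.le _)
  calc 1 / (2 * m) * g ((N : ℝ) ^ (-(1 / n))) ≤ 1 / (2 * m) * (m * g r) := by gcongr
    _ = g r / 2 := by field_simp
    _ ≤ Wg g ν μ := half_apply_le_Wg_of_measureReal_biUnion_ball_le hg0 hgmono hνS hr.le hballs

/-- The lower bound in (optimalquantization2): if `μ(B(x,r)) ≤ c₂ rⁿ` for all `x` and `r > 0`,
then every probability measure `ν` supported on at most `N` points satisfies
`W_g(ν, μ) ≥ c · g(N^{-1/n})`, with `c > 0` depending only on `c₂` and `n`. -/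
theorem Wg_lower_bound_finitely_supported {X : Type*} [MetricSpace X]
    [CompactSpace X] [MeasurableSpace X] [BorelSpace X] [Nonempty X]
    (μ : Measure X) [IsProbabilityMeasure μ]
    (n c₂ : ℝ) (hn : 0 < n) (hc₂ : 0 < c₂)
    (hball : ∀ (x : X) (r : ℝ), 0 < r → (μ (Metric.ball x r)).toReal ≤ c₂ * r ^ n)
    (g : ℝ → ℝ) (hg0 : ∀ t : ℝ, 0 ≤ t → 0 ≤ g t)
    (hgmono : ∀ s t : ℝ, 0 ≤ s → s ≤ t → g s ≤ g t)
    (hgsub : ∀ s t : ℝ, 0 ≤ s → 0 ≤ t → g (s + t) ≤ g s + g t)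
    (hglim : Filter.Tendsto g (nhdsWithin 0 (Set.Ioi 0)) (nhds 0)) :
    ∃ c > 0, ∀ N : ℕ, 1 ≤ N → ∀ ν : Measure X, IsProbabilityMeasure ν →
      (∃ S : Finset X, S.card ≤ N ∧ ν ↑S = 1) →
      c * g ((N : ℝ) ^ (-(1 / n))) ≤ Wg g ν μ :=
  Wg_lower_bound_finitely_supported_general μ n c₂ hn hc₂ hball g hg0 hgmono hgsub
end

section
/- Let (X, d) be a compact metric space with at least two points, μ a Borel probability measure on X, and let n, c₁ > 0 be real numbers such that μ(B(x,r)) ≥ c₁·rⁿ for every x ∈ X and every 0 < r ≤ diam X, where B(x,r) is the open ball. Let g : [0,∞) → [0,∞) be nondecreasing, subadditive, with lim_{t→0⁺} g(t) = 0. Then there exists a constant C > 0 depending only on c₁ and n such that for every integer N ≥ 1 there exists a Borel probability measure ν on X supported on at most N points with W_g(ν, μ) ≤ C · g(N^{−1/n}). -/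
open MeasureTheory

/-- Nearest-point selection: first point in the list within distance `r` of `y`. -/
noncomputable def nearPt {X : Type*} [MetricSpace X] (x₀ : X) (r : ℝ) : List X → X → X
  | [], _ => x₀
  | a :: l, y => if dist y a < r then a else nearPt x₀ r l y

lemma nearPt_measurable {X : Type*} [MetricSpace X] [MeasurableSpace X] [BorelSpace X]
    (x₀ : X) (r : ℝ) (l : List X) : Measurable (fun y => nearPt x₀ r l y) := by
  induction l with
  | nil => exact measurable_const
  | cons a l ih =>
    simp only [nearPt]
    have hset : MeasurableSet {y : X | dist y a < r} := measurableSet_ball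
    exact Measurable.ite hset measurable_const ih

lemma nearPt_spec {X : Type*} [MetricSpace X] (x₀ : X) (r : ℝ) (l : List X) (y : X)
    (h : ∃ a ∈ l, dist y a < r) :
    nearPt x₀ r l y ∈ l ∧ dist y (nearPt x₀ r l y) < r := by
  induction l with
  | nil => simp at h
  | cons a l ih =>
    by_cases hy : dist y a < r
    · simp [nearPt, hy]
    · obtain ⟨b, hb, hbr⟩ := h
      rcases List.mem_cons.1 hb with rfl | hb
      · exact absurd hbr hy
      · have := ih ⟨b, hb, hbr⟩
        simp only [nearPt, if_neg hy]
        exact ⟨List.mem_cons_of_mem _ this.1, this.2⟩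

lemma subadd_nsmul (g : ℝ → ℝ)
    (hgsub : ∀ s t : ℝ, 0 ≤ s → 0 ≤ t → g (s + t) ≤ g s + g t)
    (t : ℝ) (ht : 0 ≤ t) : ∀ k : ℕ, g ((k + 1 : ℕ) * t) ≤ (k + 1 : ℕ) * g t := by
  intro k
  induction k with
  | zero => simp
  | succ k ih =>
    have h1 : (((k + 1) + 1 : ℕ) : ℝ) * t = ((k + 1 : ℕ) : ℝ) * t + t := by push_cast; ring
    have h2 : (0 : ℝ) ≤ ((k + 1 : ℕ) : ℝ) * t := by positivity
    calc g (((k + 1) + 1 : ℕ) * t) = g (((k + 1 : ℕ) : ℝ) * t + t) := by rw [h1]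
      _ ≤ g (((k + 1 : ℕ) : ℝ) * t) + g t := hgsub _ _ h2 ht
      _ ≤ ((k + 1 : ℕ) : ℝ) * g t + g t := by linarith [ih]
      _ = (((k + 1) + 1 : ℕ) : ℝ) * g t := by push_cast; ring

/-- The upper bound in (optimalquantization2): if `X` has at least two points and
`μ(B(x,r)) ≥ c₁ rⁿ` for all `x` and `0 < r ≤ diam X`, then for every `N ≥ 1` there exists a
probability measure `ν` supported on at most `N` points with `W_g(ν, μ) ≤ C · g(N^{-1/n})`,
where `C > 0` depends only on `c₁` and `n`. -/
theorem Wg_upper_bound_finitely_supported {X : Type*} [MetricSpace X]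
    [CompactSpace X] [MeasurableSpace X] [BorelSpace X]
    (hX : ∃ x y : X, x ≠ y)
    (μ : Measure X) [IsProbabilityMeasure μ]
    (n c₁ : ℝ) (hn : 0 < n) (hc₁ : 0 < c₁)
    (hball : ∀ (x : X) (r : ℝ), 0 < r → r ≤ Metric.diam (Set.univ : Set X) →
      c₁ * r ^ n ≤ (μ (Metric.ball x r)).toReal)
    (g : ℝ → ℝ) (hg0 : ∀ t : ℝ, 0 ≤ t → 0 ≤ g t)
    (hgmono : ∀ s t : ℝ, 0 ≤ s → s ≤ t → g s ≤ g t)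
    (hgsub : ∀ s t : ℝ, 0 ≤ s → 0 ≤ t → g (s + t) ≤ g s + g t)
    (hglim : Filter.Tendsto g (nhdsWithin 0 (Set.Ioi 0)) (nhds 0)) :
    ∃ C > 0, ∀ N : ℕ, 1 ≤ N → ∃ ν : Measure X, IsProbabilityMeasure ν ∧
      (∃ S : Finset X, S.card ≤ N ∧ ν ↑S = 1) ∧
      Wg g ν μ ≤ C * g ((N : ℝ) ^ (-(1 / n))) := by
  classical
  obtain ⟨x₀, y₀, hxy⟩ := hX
  set c : ℝ := 2 * c₁ ^ (-(1 / n)) with hc_def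
  have hc : 0 < c := by positivity
  have hCpos : (0 : ℝ) < (⌈c⌉₊ : ℝ) := by
    exact_mod_cast Nat.lt_of_lt_of_le Nat.zero_lt_one (Nat.one_le_ceil_iff.2 hc)
  refine ⟨(⌈c⌉₊ : ℝ), hCpos, ?_⟩
  intro N hN
  set t : ℝ := (N : ℝ) ^ (-(1 / n)) with ht_def
  have hNpos : (0 : ℝ) < N := by exact_mod_cast hN
  have htpos : 0 < t := Real.rpow_pos_of_pos hNpos _
  set r : ℝ := c * t with hr_def
  have hrpos : 0 < r := by positivity
  -- Step 1: a finite set of at most N points covering X at scale r.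
  have hcover : ∃ S : Finset X, S.card ≤ N ∧ ∀ y : X, ∃ x ∈ S, dist y x < r := by
    by_cases hdiam : Metric.diam (Set.univ : Set X) < r
    · refine ⟨{x₀}, by simpa using hN, fun y => ⟨x₀, Finset.mem_singleton_self _, ?_⟩⟩
      exact lt_of_le_of_lt
        (Metric.dist_le_diam_of_mem isCompact_univ.isBounded trivial trivial) hdiam
    · push_neg at hdiam
      set sep : Finset X → Prop := fun S => ∀ x ∈ S, ∀ z ∈ S, x ≠ z → r ≤ dist x z
        with hsep_def
      have hcard : ∀ S : Finset X, sep S → S.card ≤ N := by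
        intro S hS
        have hs2 : 0 < r / 2 := by linarith
        have hs2d : r / 2 ≤ Metric.diam (Set.univ : Set X) := by linarith
        have hdisj : (↑S : Set X).PairwiseDisjoint (fun x => Metric.ball x (r / 2)) := by
          intro x hx z hz hne
          apply Metric.ball_disjoint_ball
          calc r / 2 + r / 2 = r := by ring
            _ ≤ dist x z := hS x hx z hz hne
        have hsum_le : ∑ x ∈ S, μ (Metric.ball x (r / 2)) ≤ 1 := by
          rw [← measure_biUnion_finset hdisj (fun x _ => measurableSet_ball)]
          calc μ (⋃ x ∈ S, Metric.ball x (r / 2)) ≤ μ Set.univ :=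
                measure_mono (Set.subset_univ _)
            _ = 1 := measure_univ
        have hval : c₁ * (r / 2) ^ n = (N : ℝ)⁻¹ := by
          have h1 : r / 2 = c₁ ^ (-(1 / n)) * t := by rw [hr_def, hc_def]; ring
          have h2 : (r / 2) ^ n = (c₁ ^ (-(1 / n))) ^ n * t ^ n := by
            rw [h1, Real.mul_rpow (Real.rpow_nonneg hc₁.le _) htpos.le]
          have hnn : -(1 / n) * n = -1 := by field_simp
          have h3 : (c₁ ^ (-(1 / n))) ^ n = c₁⁻¹ := by
            rw [← Real.rpow_mul hc₁.le, hnn, Real.rpow_neg_one]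
          have h4 : t ^ n = (N : ℝ)⁻¹ := by
            rw [ht_def, ← Real.rpow_mul hNpos.le, hnn, Real.rpow_neg_one]
          rw [h2, h3, h4]
          field_simp
        -- each ball has measure at least 1/N
        have hball' : ∀ x : X, ((N : ℝ)⁻¹ : ℝ) ≤ (μ (Metric.ball x (r / 2))).toReal := by
          intro x
          rw [← hval]
          exact hball x (r / 2) hs2 hs2d
        have hsum_real : (S.card : ℝ) * (N : ℝ)⁻¹
            ≤ ∑ x ∈ S, (μ (Metric.ball x (r / 2))).toReal := by
          calc (S.card : ℝ) * (N : ℝ)⁻¹ = ∑ _x ∈ S, (N : ℝ)⁻¹ := by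
                rw [Finset.sum_const, nsmul_eq_mul]
            _ ≤ _ := Finset.sum_le_sum (fun x _ => hball' x)
        have hsum_real' : ∑ x ∈ S, (μ (Metric.ball x (r / 2))).toReal ≤ 1 := by
          rw [← ENNReal.toReal_sum (fun x _ => measure_ne_top μ _)]
          have := ENNReal.toReal_mono (by norm_num) hsum_le
          simpa using this
        have : (S.card : ℝ) ≤ N := by
          have h := le_trans hsum_real hsum_real'
          rw [mul_inv_le_iff₀ hNpos] at h
          simpa using h
        exact_mod_cast this
      -- take a separated set of maximal cardinality
      set K : Set ℕ := {k | ∃ S : Finset X, sep S ∧ S.card = k} with hK_def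
      have hK1 : 1 ∈ K := ⟨{x₀}, by simp [hsep_def], by simp⟩
      have hKbdd : BddAbove K := ⟨N, fun k ⟨S, hS, hSc⟩ => hSc ▸ hcard S hS⟩
      obtain ⟨S, hSsep, hScard⟩ := Nat.sSup_mem ⟨1, hK1⟩ hKbdd
      refine ⟨S, hScard ▸ hcard S hSsep, ?_⟩
      intro y
      by_contra hy
      push_neg at hy
      have hyS : y ∉ S := fun h => by
        have := hy y h
        rw [dist_self] at this
        linarith
      have hsep' : sep (insert y S) := by
        intro a ha b hb hab
        rcases Finset.mem_insert.1 ha with ha' | ha'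
        · rcases Finset.mem_insert.1 hb with hb' | hb'
          · exact absurd (ha'.trans hb'.symm) hab
          · rw [ha']; exact hy b hb'
        · rcases Finset.mem_insert.1 hb with hb' | hb'
          · rw [hb', dist_comm]; exact hy a ha'
          · exact hSsep a ha' b hb' hab
      have : S.card + 1 ∈ K := ⟨insert y S, hsep', by rw [Finset.card_insert_of_notMem hyS]⟩
      have := le_csSup hKbdd this
      omega
  obtain ⟨S, hScard, hScover⟩ := hcover
  -- Step 2: build the quantization map and the coupling.
  set T : X → X := fun y => nearPt x₀ r S.toList y with hT_def
  have hTmeas : Measurable T := nearPt_measurable x₀ r S.toList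
  have hTspec : ∀ y : X, T y ∈ S ∧ dist y (T y) < r := by
    intro y
    obtain ⟨x, hxS, hxr⟩ := hScover y
    have := nearPt_spec x₀ r S.toList y ⟨x, Finset.mem_toList.mpr hxS, hxr⟩
    exact ⟨Finset.mem_toList.mp this.1, this.2⟩
  set ν : Measure X := μ.map T with hν_def
  have hνprob : IsProbabilityMeasure ν := Measure.isProbabilityMeasure_map hTmeas.aemeasurable
  have hνS : ν ↑S = 1 := by
    rw [hν_def, Measure.map_apply hTmeas (S.finite_toSet.measurableSet)]
    have : T ⁻¹' ↑S = Set.univ := Set.eq_univ_of_forall (fun y => (hTspec y).1)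
    rw [this, measure_univ]
  -- the coupling
  set Φ : X → X × X := fun y => (T y, y) with hΦ_def
  have hΦmeas : Measurable Φ := hTmeas.prodMk measurable_id
  set θ : Measure (X × X) := μ.map Φ with hθ_def
  have hθprob : IsProbabilityMeasure θ := Measure.isProbabilityMeasure_map hΦmeas.aemeasurable
  have hfst : θ.map Prod.fst = ν := by
    rw [hθ_def, Measure.map_map measurable_fst hΦmeas]
    rfl
  have hsnd : θ.map Prod.snd = μ := by
    rw [hθ_def, Measure.map_map measurable_snd hΦmeas]
    exact Measure.map_id
  -- measurable version of g on nonnegative reals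
  set g' : ℝ → ℝ := fun x => g (max x 0) with hg'_def
  have hg'mono : Monotone g' := by
    intro a b hab
    exact hgmono _ _ (le_max_right a 0) (max_le_max hab le_rfl)
  have hg'meas : Measurable g' := hg'mono.measurable
  have hg'eq : ∀ a : ℝ, 0 ≤ a → g' a = g a := by
    intro a ha; simp [hg'_def, max_eq_left ha]
  have hint_eq : (fun q : X × X => g (dist q.1 q.2)) = fun q => g' (dist q.1 q.2) := by
    funext q; rw [hg'eq _ dist_nonneg]
  -- the cost of the coupling
  have hintmeas : Measurable fun q : X × X => g' (dist q.1 q.2) :=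
    hg'meas.comp (measurable_fst.dist measurable_snd)
  have hcost : ∫ q, g (dist q.1 q.2) ∂θ = ∫ y, g' (dist (T y) y) ∂μ := by
    rw [hint_eq, hθ_def, integral_map hΦmeas.aemeasurable hintmeas.aestronglyMeasurable]
  have hbound : ∀ y : X, g' (dist (T y) y) ≤ g r := by
    intro y
    rw [hg'eq _ dist_nonneg]
    exact hgmono _ _ dist_nonneg (by rw [dist_comm]; exact (hTspec y).2.le)
  have hnonneg : ∀ y : X, 0 ≤ g' (dist (T y) y) := by
    intro y; rw [hg'eq _ dist_nonneg]; exact hg0 _ dist_nonneg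
  have hintble : Integrable (fun y => g' (dist (T y) y)) μ := by
    refine Integrable.mono' (integrable_const (g r))
      ((show Measurable fun y => g' (dist (T y) y) from
        hg'meas.comp (hTmeas.dist measurable_id)).aestronglyMeasurable)
      (Filter.Eventually.of_forall fun y => ?_)
    rw [Real.norm_eq_abs, abs_of_nonneg (hnonneg y)]
    exact hbound y
  have hcost_le : ∫ y, g' (dist (T y) y) ∂μ ≤ g r := by
    calc ∫ y, g' (dist (T y) y) ∂μ ≤ ∫ _y, g r ∂μ :=
          integral_mono hintble (integrable_const _) hbound
      _ = g r := by simp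
  -- membership and bounded below
  have hmem : ∫ q, g (dist q.1 q.2) ∂θ ∈
      { s : ℝ | ∃ θ' : Measure (X × X), IsProbabilityMeasure θ' ∧
        θ'.map Prod.fst = ν ∧ θ'.map Prod.snd = μ ∧ s = ∫ q, g (dist q.1 q.2) ∂θ' } :=
    ⟨θ, hθprob, hfst, hsnd, rfl⟩
  have hbdd : BddBelow { s : ℝ | ∃ θ' : Measure (X × X), IsProbabilityMeasure θ' ∧
      θ'.map Prod.fst = ν ∧ θ'.map Prod.snd = μ ∧ s = ∫ q, g (dist q.1 q.2) ∂θ' } := by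
    refine ⟨0, fun s ⟨θ', hθ', _, _, hs⟩ => ?_⟩
    rw [hs]
    exact integral_nonneg (fun q => hg0 _ dist_nonneg)
  have hWg_le : Wg g ν μ ≤ g r := by
    calc Wg g ν μ ≤ ∫ q, g (dist q.1 q.2) ∂θ := csInf_le hbdd hmem
      _ = ∫ y, g' (dist (T y) y) ∂μ := hcost
      _ ≤ g r := hcost_le
  -- final bound: g r ≤ ⌈c⌉₊ * g t
  have hkey : g r ≤ (⌈c⌉₊ : ℝ) * g t := by
    have hceil1 : 1 ≤ ⌈c⌉₊ := Nat.one_le_ceil_iff.2 hc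
    obtain ⟨k, hk⟩ : ∃ k : ℕ, ⌈c⌉₊ = k + 1 := ⟨⌈c⌉₊ - 1, by omega⟩
    have hle : r ≤ ((k + 1 : ℕ) : ℝ) * t := by
      rw [← hk]; exact mul_le_mul_of_nonneg_right (Nat.le_ceil c) htpos.le
    calc g r ≤ g (((k + 1 : ℕ) : ℝ) * t) := hgmono _ _ hrpos.le hle
      _ ≤ ((k + 1 : ℕ) : ℝ) * g t := subadd_nsmul g hgsub t htpos.le k
      _ = (⌈c⌉₊ : ℝ) * g t := by rw [hk]
  exact ⟨ν, hνprob, ⟨S, hScard, hνS⟩, le_trans hWg_le hkey⟩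
end
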